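/- arXiv:2210.09119 — 2 statements merged into one kernel-verified Lean document; each statement's English description precedes it below -/
import Mathlib

section
/- The abelianization of the Mathieu group M11 is trivial; equivalently, M11 equals its own commutator subgroup. -/
set_option maxRecDepth 10000

open Equiv

/-- The 11-cycle (1,2,3,4,5,6,7,8,9,10,11) (0-indexed on `Fin 11`). -/
def m11a : Equiv.Perm (Fin 11) := c[0, 1, 2, 3, 4, 5, 6, 7, 8, 9, 10]

/-- The permutation (3,7,11,8)(4,10,5,6) (0-indexed on `Fin 11`). -/
def m11b : Equiv.Perm (Fin 11) := c[2, 6, 10, 7] * c[3, 9, 4, 5]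

/-- The Mathieu group `M₁₁` as a subgroup of `S₁₁`. -/
def M11 : Subgroup (Equiv.Perm (Fin 11)) := Subgroup.closure {m11a, m11b}

lemma m11a_mem : m11a ∈ M11 := Subgroup.subset_closure (by simp)
lemma m11b_mem : m11b ∈ M11 := Subgroup.subset_closure (by simp)

lemma pow11 : m11a ^ 11 = 1 := by decide
lemma pow4 : m11b ^ 4 = 1 := by decide
lemma powab : (m11a * m11b) ^ 11 = 1 := by decide
lemma powab2 : (m11a * m11b ^ 2) ^ 3 = 1 := by decide

/-- The abelianization of M11 is trivial; equivalently M11 equals its own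
commutator subgroup. -/
theorem M11_perfect :
    (∀ x : Abelianization M11, x = 1) ∧ commutator M11 = ⊤ := by
  have key : ∀ x : Abelianization M11, x = 1 := by
    set A : Abelianization M11 := Abelianization.of ⟨m11a, m11a_mem⟩ with hA
    set B : Abelianization M11 := Abelianization.of ⟨m11b, m11b_mem⟩ with hB
    have sA : (⟨m11a, m11a_mem⟩ : M11) ^ 11 = 1 := by
      apply Subtype.ext
      rw [SubmonoidClass.coe_pow, OneMemClass.coe_one]
      exact pow11
    have sB : (⟨m11b, m11b_mem⟩ : M11) ^ 4 = 1 := by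
      apply Subtype.ext
      rw [SubmonoidClass.coe_pow, OneMemClass.coe_one]
      exact pow4
    have sAB : ((⟨m11a, m11a_mem⟩ : M11) * ⟨m11b, m11b_mem⟩) ^ 11 = 1 := by
      apply Subtype.ext
      rw [SubmonoidClass.coe_pow, Subgroup.coe_mul, OneMemClass.coe_one]
      exact powab
    have sAB2 : ((⟨m11a, m11a_mem⟩ : M11) * (⟨m11b, m11b_mem⟩ : M11) ^ 2) ^ 3 = 1 := by
      apply Subtype.ext
      rw [SubmonoidClass.coe_pow, Subgroup.coe_mul, SubmonoidClass.coe_pow,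
        OneMemClass.coe_one]
      exact powab2
    have hA11 : A ^ 11 = 1 := by rw [hA, ← map_pow, sA, map_one]
    have hB4 : B ^ 4 = 1 := by rw [hB, ← map_pow, sB, map_one]
    have hAB : (A * B) ^ 11 = 1 := by
      rw [hA, hB, ← map_mul, ← map_pow, sAB, map_one]
    have hAB2 : (A * B ^ 2) ^ 3 = 1 := by
      rw [hA, hB, ← map_pow, ← map_mul, ← map_pow, sAB2, map_one]
    -- derive B = 1
    have hB1 : B = 1 := by
      have h11 : B ^ 11 = 1 := by
        have h := hAB
        rw [mul_pow, hA11, one_mul] at h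
        exact h
      have h12 : B ^ 12 = 1 := by
        have : B ^ 12 = (B ^ 4) ^ 3 := by group
        rw [this, hB4, one_pow]
      calc B = B ^ 12 * (B ^ 11)⁻¹ := by group
        _ = 1 := by rw [h11, h12]; group
    have hA1 : A = 1 := by
      have h3 : A ^ 3 = 1 := by
        have h := hAB2
        rw [mul_pow, hB1] at h
        simpa using h
      have h12 : A ^ 12 = 1 := by
        have : A ^ 12 = (A ^ 3) ^ 4 := by group
        rw [this, h3, one_pow]
      calc A = A ^ 12 * (A ^ 11)⁻¹ := by group
        _ = 1 := by rw [h12, hA11]; group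
    intro x
    obtain ⟨g, rfl⟩ := QuotientGroup.mk_surjective x
    show Abelianization.of g = 1
    obtain ⟨g, hg⟩ := g
    induction hg using Subgroup.closure_induction with
    | mem y hy =>
      rcases hy with rfl | rfl
      · exact hA1
      · exact hB1
    | one => rfl
    | mul y z hy hz ihy ihz =>
      have : (⟨y * z, _⟩ : M11) = ⟨y, hy⟩ * ⟨z, hz⟩ := rfl
      rw [this, map_mul, ihy, ihz, one_mul]
    | inv y hy ihy =>
      have : (⟨y⁻¹, _⟩ : M11) = (⟨y, hy⟩ : M11)⁻¹ := rfl
      rw [this, map_inv, ihy, inv_one]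
  refine ⟨key, ?_⟩
  rw [eq_top_iff]
  intro g _
  exact (QuotientGroup.eq_one_iff g).mp (key (Abelianization.of g))
end

section
/- The normalizer in M11 of a Sylow 11-subgroup is a group of order 55 that is not cyclic. -/
open Equiv

set_option maxRecDepth 4000

namespace M11Aux

instance : Fact (Nat.Prime 11) := ⟨by norm_num⟩
instance : Fact (Nat.Prime 5) := ⟨by norm_num⟩

/-- An element of order 5 normalizing the Sylow 11-subgroup generated by `m11a`;
as a function it is `x ↦ 9*x + 6` on `ZMod 11`. -/
def m11w : Equiv.Perm (Fin 11) := c[0, 6, 5, 7, 3] * c[1, 4, 9, 10, 8]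

lemma m11w_word : m11w = m11b * m11a^3 * m11b^2 * m11a * m11b * m11a * m11b := by decide

lemma orderOf_m11a : orderOf m11a = 11 := orderOf_eq_prime (by decide) (by decide)
lemma orderOf_m11w : orderOf m11w = 5 := orderOf_eq_prime (by decide) (by decide)

/-- `m11a` viewed as a permutation of `ZMod 11` (definitionally equal to `Fin 11`). -/
def m11a' : Equiv.Perm (ZMod 11) := m11a

lemma orderOf_m11a' : orderOf m11a' = 11 := orderOf_eq_prime (by decide) (by decide)

lemma m11a'_apply : ∀ x : ZMod 11, m11a' x = x + 1 := by decide

lemma m11a'_pow_apply (i : ℕ) (c : ZMod 11) : (m11a' ^ i) c = c + i := by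
  induction i generalizing c with
  | zero => simp
  | succ n ih =>
      rw [pow_succ, Equiv.Perm.mul_apply, m11a'_apply, ih]
      push_cast
      ring

/-- The affine permutation `x ↦ k*x + t` of `ZMod 11` (junk value `1` if `k = 0`). -/
def aff (k t : ZMod 11) : Equiv.Perm (ZMod 11) :=
  if hk : k = 0 then 1 else (Equiv.mulLeft₀ k hk).trans (Equiv.addRight t)

lemma aff_apply {k : ZMod 11} (hk : k ≠ 0) (t x : ZMod 11) : aff k t x = k * x + t := by
  rw [aff, dif_neg hk]; rfl

/-- `aff` viewed as a permutation of `Fin 11`. -/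
def affF (k t : ZMod 11) : Equiv.Perm (Fin 11) := aff k t

lemma sign_aff : ∀ k t : ZMod 11, k ≠ 0 → Equiv.Perm.sign (affF k t) = 1 →
    (k = 1 ∨ k = 3 ∨ k = 4 ∨ k = 5 ∨ k = 9) := by decide

lemma slope_ne_zero {g : Equiv.Perm (ZMod 11)} {j : ℕ}
    (h : g * m11a' * g⁻¹ = m11a' ^ j) : (j : ZMod 11) ≠ 0 := by
  intro h0
  have h11 : (11 : ℕ) ∣ j := by rwa [ZMod.natCast_eq_zero_iff] at h0
  have hpow : m11a' ^ j = 1 :=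
    orderOf_dvd_iff_pow_eq_one.mp (by rw [orderOf_m11a']; exact h11)
  rw [hpow] at h
  have h2 : m11a' = g⁻¹ * (g * m11a' * g⁻¹) * g := by group
  rw [h] at h2
  simp at h2
  exact absurd h2 (by decide)

lemma eq_aff {g : Equiv.Perm (ZMod 11)} {j : ℕ} (h : g * m11a' * g⁻¹ = m11a' ^ j)
    (hj : (j : ZMod 11) ≠ 0) : g = aff (j : ZMod 11) (g 0) := by
  have key : ∀ i : ℕ, g * m11a' ^ i * g⁻¹ = m11a' ^ (j * i) := by
    intro i
    rw [← conj_pow, h, ← pow_mul]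
  ext x
  have hx0 : (m11a' ^ (ZMod.val x)) 0 = x := by
    rw [m11a'_pow_apply, zero_add, ZMod.natCast_rightInverse x]
  calc g x = (g * m11a' ^ (ZMod.val x) * g⁻¹) (g 0) := by
              rw [Equiv.Perm.mul_apply, Equiv.Perm.mul_apply,
                Equiv.Perm.inv_def, Equiv.symm_apply_apply, hx0]
    _ = (m11a' ^ (j * ZMod.val x)) (g 0) := by rw [key]
    _ = g 0 + (j * ZMod.val x : ℕ) := m11a'_pow_apply _ _
    _ = aff (j : ZMod 11) (g 0) x := by
          rw [aff_apply hj, Nat.cast_mul, ZMod.natCast_rightInverse x]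
          ring

lemma exists_pow_eq {G : Type*} [Group G] [Finite G] {a c : G}
    (h : c ∈ Subgroup.zpowers a) : ∃ j : ℕ, c = a ^ j := by
  rw [← mem_powers_iff_mem_zpowers] at h
  obtain ⟨j, hj⟩ := h
  exact ⟨j, hj.symm⟩

lemma mem_normalizer_zpowers {G : Type*} [Group G] {a u : G}
    (h1 : u * a * u⁻¹ ∈ Subgroup.zpowers a) (h2 : u⁻¹ * a * u ∈ Subgroup.zpowers a) :
    u ∈ Subgroup.normalizer ((Subgroup.zpowers a : Subgroup G) : Set G) := by
  rw [Subgroup.mem_normalizer_iff]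
  rw [Subgroup.mem_zpowers_iff] at h1 h2
  intro h
  rw [Subgroup.mem_zpowers_iff, Subgroup.mem_zpowers_iff]
  constructor
  · rintro ⟨k, rfl⟩
    obtain ⟨m, hm⟩ := h1
    refine ⟨m * k, ?_⟩
    rw [zpow_mul, hm, conj_zpow]
  · rintro ⟨k, hk⟩
    obtain ⟨m, hm⟩ := h2
    have hh2 : h = u⁻¹ * a ^ k * u := by rw [hk]; group
    refine ⟨m * k, ?_⟩
    rw [hh2, zpow_mul, hm, show u⁻¹ * a * u = u⁻¹ * a * u⁻¹⁻¹ by rw [inv_inv],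
      conj_zpow, inv_inv]

lemma M11_le_alt : M11 ≤ alternatingGroup (Fin 11) := by
  rw [M11, Subgroup.closure_le]
  rintro x (rfl | rfl)
  · exact Equiv.Perm.mem_alternatingGroup.mpr (by decide)
  · exact Equiv.Perm.mem_alternatingGroup.mpr (by decide)

lemma m11a_mem : m11a ∈ M11 := Subgroup.subset_closure (Set.mem_insert _ _)
lemma m11b_mem : m11b ∈ M11 := Subgroup.subset_closure (Set.mem_insert_of_mem _ rfl)
lemma m11w_mem : m11w ∈ M11 := by
  rw [m11w_word]
  exact mul_mem (mul_mem (mul_mem (mul_mem (mul_mem (mul_mem m11b_mem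
    (pow_mem m11a_mem 3)) (pow_mem m11b_mem 2)) m11a_mem) m11b_mem) m11a_mem) m11b_mem

/-- `m11a` as an element of `M11`. -/
def A : M11 := ⟨m11a, m11a_mem⟩
/-- `m11w` as an element of `M11`. -/
def W : M11 := ⟨m11w, m11w_mem⟩

lemma A_coe : (A : Equiv.Perm (Fin 11)) = m11a := rfl
lemma W_coe : (W : Equiv.Perm (Fin 11)) = m11w := rfl

/-- The normalizer of the Sylow 11-subgroup `⟨m11a⟩` of `M11`. -/
def N0 : Subgroup M11 := Subgroup.normalizer ((Subgroup.zpowers A : Subgroup M11) : Set M11)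

lemma orderOf_A : orderOf A = 11 := by
  have h := orderOf_injective M11.subtype M11.subtype_injective A
  rw [show M11.subtype A = m11a from rfl, orderOf_m11a] at h
  exact h.symm

lemma orderOf_W : orderOf W = 5 := by
  have h := orderOf_injective M11.subtype M11.subtype_injective W
  rw [show M11.subtype W = m11w from rfl, orderOf_m11w] at h
  exact h.symm

lemma A_in_N0 : A ∈ N0 := Subgroup.le_normalizer (Subgroup.mem_zpowers A)

lemma W_in_N0 : W ∈ N0 := by
  have e1 : W * A * W⁻¹ = A ^ 9 := Subtype.ext (by decide)
  have e2 : W⁻¹ * A * W = A ^ 5 := Subtype.ext (by decide)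
  refine mem_normalizer_zpowers ?_ ?_
  · rw [e1]; exact Subgroup.pow_mem _ (Subgroup.mem_zpowers A) 9
  · rw [e2]; exact Subgroup.pow_mem _ (Subgroup.mem_zpowers A) 5

lemma key_aff (n : N0) : ∃ k t : ZMod 11, (k = 1 ∨ k = 3 ∨ k = 4 ∨ k = 5 ∨ k = 9) ∧
    ((n : M11) : Equiv.Perm (Fin 11)) = affF k t := by
  set g : Equiv.Perm (Fin 11) := ((n : M11) : Equiv.Perm (Fin 11)) with hgdef
  have hsign : Equiv.Perm.sign g = 1 :=
    Equiv.Perm.mem_alternatingGroup.mp (M11_le_alt (n : M11).2)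
  have hconj : g * m11a * g⁻¹ ∈ Subgroup.zpowers m11a := by
    have h1 : (n : M11) * A * (n : M11)⁻¹ ∈ Subgroup.zpowers A :=
      (Subgroup.mem_normalizer_iff.mp n.2 A).mp (Subgroup.mem_zpowers A)
    obtain ⟨k, hk⟩ := h1
    refine ⟨k, ?_⟩
    have := congrArg (fun z : M11 => (z : Equiv.Perm (Fin 11))) hk
    simpa [A_coe, ← hgdef] using this
  obtain ⟨j, hj⟩ := exists_pow_eq hconj
  let g' : Equiv.Perm (ZMod 11) := g
  have hj' : g' * m11a' * g'⁻¹ = m11a' ^ j := hj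
  have hj0 : (j : ZMod 11) ≠ 0 := slope_ne_zero hj'
  have hgaff' : g' = aff (j : ZMod 11) (g' 0) := eq_aff hj' hj0
  have hgaff : g = affF (j : ZMod 11) (g' 0) := hgaff'
  refine ⟨(j : ZMod 11), g' 0, ?_, hgaff⟩
  refine sign_aff _ (g' 0) hj0 ?_
  rw [← hgaff]
  exact hsign

lemma card_N0 : Nat.card N0 = 55 := by
  classical
  -- lower bound: 55 ∣ card N0
  have h11 : (11 : ℕ) ∣ Nat.card N0 := by
    have hd := orderOf_dvd_natCard (⟨A, A_in_N0⟩ : N0)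
    have e : orderOf (⟨A, A_in_N0⟩ : N0) = 11 := by
      have h := orderOf_injective N0.subtype N0.subtype_injective ⟨A, A_in_N0⟩
      rw [show N0.subtype ⟨A, A_in_N0⟩ = A from rfl, orderOf_A] at h
      exact h.symm
    rwa [e] at hd
  have h5 : (5 : ℕ) ∣ Nat.card N0 := by
    have hd := orderOf_dvd_natCard (⟨W, W_in_N0⟩ : N0)
    have e : orderOf (⟨W, W_in_N0⟩ : N0) = 5 := by
      have h := orderOf_injective N0.subtype N0.subtype_injective ⟨W, W_in_N0⟩
      rw [show N0.subtype ⟨W, W_in_N0⟩ = W from rfl, orderOf_W] at h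
      exact h.symm
    rwa [e] at hd
  have h55 : (55 : ℕ) ∣ Nat.card N0 := by
    have : (11 * 5 : ℕ) ∣ Nat.card N0 :=
      (Nat.coprime_primes (by norm_num) (by norm_num)).mpr (by norm_num)
        |>.mul_dvd_of_dvd_of_dvd h11 h5
    simpa using this
  -- upper bound: card N0 ≤ 55
  have hle : Nat.card N0 ≤ 55 := by
    set S : Finset (ZMod 11 × ZMod 11) :=
      ({1, 3, 4, 5, 9} : Finset (ZMod 11)) ×ˢ Finset.univ with hS
    have hcard : S.card = 55 := by decide
    have hmem : ∀ n : N0,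
        ((((n : M11) : Equiv.Perm (Fin 11)) 1 - ((n : M11) : Equiv.Perm (Fin 11)) 0,
          ((n : M11) : Equiv.Perm (Fin 11)) 0) : ZMod 11 × ZMod 11) ∈ S := by
      intro n
      obtain ⟨k, t, hk, he⟩ := key_aff n
      have hk0 : k ≠ 0 := by rcases hk with rfl | rfl | rfl | rfl | rfl <;> decide
      have h0 : (((n : M11) : Equiv.Perm (Fin 11)) 0 : ZMod 11) = t := by
        rw [he]; show aff k t 0 = t; rw [aff_apply hk0]; ring
      have h1 : (((n : M11) : Equiv.Perm (Fin 11)) 1 : ZMod 11) = k + t := by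
        rw [he]; show aff k t 1 = k + t; rw [aff_apply hk0]; ring
      rw [hS, Finset.mem_product]
      refine ⟨?_, Finset.mem_univ _⟩
      dsimp only
      have : (((n : M11) : Equiv.Perm (Fin 11)) 1 -
          ((n : M11) : Equiv.Perm (Fin 11)) 0 : ZMod 11) = k := by
        rw [h0, h1]; exact add_sub_cancel_right (G := ZMod 11) k t
      rw [this]
      rcases hk with rfl | rfl | rfl | rfl | rfl <;> decide
    let F : N0 → {p // p ∈ S} := fun n =>
      ⟨(((n : M11) : Equiv.Perm (Fin 11)) 1 - ((n : M11) : Equiv.Perm (Fin 11)) 0,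
        ((n : M11) : Equiv.Perm (Fin 11)) 0), hmem n⟩
    have hinj : Function.Injective F := by
      intro n m hnm
      obtain ⟨k, t, hk, he⟩ := key_aff n
      obtain ⟨k', t', hk', he'⟩ := key_aff m
      have hk0 : k ≠ 0 := by rcases hk with rfl | rfl | rfl | rfl | rfl <;> decide
      have hk0' : k' ≠ 0 := by rcases hk' with rfl | rfl | rfl | rfl | rfl <;> decide
      have h0 : (((n : M11) : Equiv.Perm (Fin 11)) 0 : ZMod 11) = t := by
        rw [he]; show aff k t 0 = t; rw [aff_apply hk0]; ring
      have h1 : (((n : M11) : Equiv.Perm (Fin 11)) 1 : ZMod 11) = k + t := by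
        rw [he]; show aff k t 1 = k + t; rw [aff_apply hk0]; ring
      have h0' : (((m : M11) : Equiv.Perm (Fin 11)) 0 : ZMod 11) = t' := by
        rw [he']; show aff k' t' 0 = t'; rw [aff_apply hk0']; ring
      have h1' : (((m : M11) : Equiv.Perm (Fin 11)) 1 : ZMod 11) = k' + t' := by
        rw [he']; show aff k' t' 1 = k' + t'; rw [aff_apply hk0']; ring
      have hpair := Subtype.ext_iff.mp hnm
      have hc1 := congrArg Prod.fst hpair
      have hc2 := congrArg Prod.snd hpair
      simp only [F] at hc1 hc2
      rw [h0, h0'] at hc2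
      rw [h0, h0', h1, h1', hc2] at hc1
      have hkk : k = k' := by
        have := hc1
        exact (add_sub_cancel_right (G := ZMod 11) k t').symm.trans
          (this.trans (add_sub_cancel_right (G := ZMod 11) k' t'))
      apply Subtype.ext
      apply Subtype.ext
      show ((n : M11) : Equiv.Perm (Fin 11)) = ((m : M11) : Equiv.Perm (Fin 11))
      rw [he, he', hkk, hc2]
    calc Nat.card N0 ≤ Nat.card {p // p ∈ S} := Nat.card_le_card_of_injective F hinj
      _ = 55 := by rw [Nat.card_eq_finsetCard, hcard]
  have hpos : 0 < Nat.card N0 := Nat.card_pos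
  exact le_antisymm hle (Nat.le_of_dvd hpos h55)

lemma not_cyclic_N0 : ¬ IsCyclic N0 := by
  intro h
  obtain ⟨z, hz⟩ := h.exists_generator
  obtain ⟨i, hi⟩ := hz ⟨A, A_in_N0⟩
  obtain ⟨j, hj⟩ := hz ⟨W, W_in_N0⟩
  have comm : (⟨A, A_in_N0⟩ : N0) * ⟨W, W_in_N0⟩ = ⟨W, W_in_N0⟩ * ⟨A, A_in_N0⟩ := by
    rw [← hi, ← hj, ← zpow_add, ← zpow_add, add_comm]
  have hcc := congrArg (fun u : N0 => ((u : M11) : Equiv.Perm (Fin 11))) comm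
  have : m11a * m11w = m11w * m11a := hcc
  exact absurd this (by decide)

end M11Aux

open M11Aux in
/-- The normalizer in M11 of a Sylow 11-subgroup is a group of order 55 which is
not cyclic (hence nonabelian, isomorphic to C11 ⋊ C5 with C5 acting faithfully). -/
theorem M11_sylow_eleven_normalizer (P : Sylow 11 M11) :
    Nat.card (Subgroup.normalizer ((P : Subgroup M11) : Set M11)) = 55 ∧
    ¬ IsCyclic (Subgroup.normalizer ((P : Subgroup M11) : Set M11)) := by
  classical
  have hcardZ : Nat.card (Subgroup.zpowers A) = 11 := by
    rw [Nat.card_zpowers, orderOf_A]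
  have hpg : IsPGroup 11 (Subgroup.zpowers A) :=
    IsPGroup.of_card (by rw [hcardZ, pow_one])
  obtain ⟨Q, hQle⟩ := hpg.exists_le_sylow
  have hQcard : Nat.card (Q : Subgroup M11) = 11 := by
    obtain ⟨n, hn⟩ := Q.isPGroup'.exists_card_eq
    have h1 : (11 : ℕ) ∣ Nat.card (Q : Subgroup M11) := by
      have := Subgroup.card_dvd_of_le hQle
      rwa [hcardZ] at this
    have h2 : Nat.card (Q : Subgroup M11) ∣ Nat.card (Equiv.Perm (Fin 11)) :=
      (Subgroup.card_subgroup_dvd_card (Q : Subgroup M11)).trans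
        (Subgroup.card_subgroup_dvd_card M11)
    have hperm : Nat.card (Equiv.Perm (Fin 11)) = 39916800 := by
      rw [Nat.card_eq_fintype_card, Fintype.card_perm, Fintype.card_fin]
      norm_num [Nat.factorial]
    rw [hn] at h1 h2 ⊢
    rw [hperm] at h2
    have hn1 : n = 1 := by
      rcases n with _ | _ | m
      · norm_num at h1
      · rfl
      · exfalso
        have hdvd : (11 : ℕ) ^ 2 ∣ 11 ^ (m + 2) := pow_dvd_pow _ (by omega)
        have := hdvd.trans h2
        norm_num at this
    rw [hn1, pow_one]
  have hQ_eq : (Q : Subgroup M11) = Subgroup.zpowers A :=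
    (Subgroup.eq_of_le_of_card_ge hQle (by rw [hcardZ, hQcard])).symm
  obtain ⟨g, hg⟩ := MulAction.exists_smul_eq M11 Q P
  have hP : (P : Subgroup M11) =
      Subgroup.map (MulAut.conj g).toMonoidHom (Subgroup.zpowers A) := by
    rw [← hg, Sylow.coe_subgroup_smul, hQ_eq, Subgroup.pointwise_smul_def]
    rfl
  have hnorm : Subgroup.normalizer ((P : Subgroup M11) : Set M11) =
      Subgroup.map (MulAut.conj g).toMonoidHom N0 := by
    rw [hP, ← Subgroup.map_equiv_normalizer_eq]; rfl
  have e : N0 ≃* Subgroup.map (MulAut.conj g).toMonoidHom N0 :=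
    Subgroup.equivMapOfInjective N0 _ (MulAut.conj g).injective
  constructor
  · rw [hnorm, ← Nat.card_congr e.toEquiv]
    exact card_N0
  · rw [hnorm]
    intro hc
    exact not_cyclic_N0 (isCyclic_of_surjective e.symm e.symm.surjective)
end
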